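/- arXiv:1401.2971 — 2 statements merged into one kernel-verified Lean document; each statement's English description precedes it below -/
import Mathlib

section
/- Let V ∈ S(ℝ^d) be such that V̂(ξ) is real and nonnegative for every ξ ∈ ℝ^d. If C_ℓ(V) = 0 for some integer ℓ ≥ 2, then V(x) = 0 for all x ∈ ℝ^d. -/
/-! When `V̂ ≥ 0`, every `C_{n,k}(V)` is nonnegative, so `C_ℓ(V) = 0` forces `C_{ℓ-2,2}(V) = 0`.
Since `V̂(-ξ)` is the conjugate of `V̂(ξ)`, the coefficient `C_{n,2}(V)` is a positive multiple of
`∫ |V̂(ξ)|² |ξ|^{αn} dξ`; this integrand is continuous, nonnegative and integrable (`V̂` is a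
Schwartz function), so it vanishes identically, hence `V̂ = 0` off the origin, hence everywhere,
and Fourier inversion gives `V = 0`. -/

open MeasureTheory Real Filter Topology Asymptotics
open scoped RealInnerProductSpace

noncomputable section

/-- Euclidean space ℝ^d. -/
abbrev Ed (d : ℕ) : Type := EuclideanSpace ℝ (Fin d)

/-- The α-stable heat kernel `p_t^{(α)}(x) = (2π)^{-d} ∫ cos(x·ξ) e^{-t|ξ|^α} dξ` on ℝ^d. -/
def heatKernel (d : ℕ) (α t : ℝ) (x : Ed d) : ℝ :=
  ((2 * Real.pi) ^ d)⁻¹ * ∫ ξ : Ed d, Real.cos (inner ℝ x ξ : ℝ) * Real.exp (-t * ‖ξ‖ ^ α)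

/-- Two-point heat kernel `p_t^{(α)}(x,y) = p_t^{(α)}(x-y)`. -/
def heatKernelP (d : ℕ) (α t : ℝ) (x y : Ed d) : ℝ := heatKernel d α t (x - y)

/-- The simplex `I_k = {0 < λ_k < ⋯ < λ_1 < 1}` (0-indexed: `lam 0 = λ_1`). -/
def Ik (k : ℕ) : Set (Fin k → ℝ) :=
  {lam | (∀ i j : Fin k, i < j → lam j < lam i) ∧ ∀ i, lam i ∈ Set.Ioo (0 : ℝ) 1}

/-- `p(t,z,λ) = ∏_{j=1}^{k-1} p_{t(λ_j - λ_{j+1})}^{(α)}(z_j, z_{j+1})`. -/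
def pChain (d : ℕ) (α : ℝ) {k : ℕ} (t : ℝ) (lam : Fin k → ℝ) (z : Fin k → Ed d) : ℝ :=
  ∏ j : Fin (k - 1),
    heatKernelP d α
      (t * (lam ⟨j.1, by have := j.isLt; omega⟩ - lam ⟨j.1 + 1, by have := j.isLt; omega⟩))
      (z ⟨j.1, by have := j.isLt; omega⟩) (z ⟨j.1 + 1, by have := j.isLt; omega⟩)

/-- `a_k(t) = ∫_{I_k} ∫_{(ℝ^d)^k} V_k(z) p(t,z,λ) dz dλ`. -/
def aCoeff (d : ℕ) (α : ℝ) (V : Ed d → ℝ) (k : ℕ) (t : ℝ) : ℝ :=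
  ∫ lam in Ik k, ∫ z : (Fin k → Ed d), (∏ i, V (z i)) * pChain d α t lam z

/-- The heat content `Q_V^{(α)}(t) = Σ_{k=1}^∞ (-t)^k a_k(t)`. -/
def Qheat (d : ℕ) (α : ℝ) (V : Ed d → ℝ) (t : ℝ) : ℝ :=
  ∑' k : ℕ, (-t) ^ (k + 1) * aCoeff d α V (k + 1) t

/-- Fourier transform `V̂(ξ) = ∫ e^{-i x·ξ} V(x) dx`. -/
def ftransform (d : ℕ) (V : Ed d → ℝ) (ξ : Ed d) : ℂ :=
  ∫ x : Ed d, Complex.exp (-Complex.I * ((inner ℝ x ξ : ℝ) : ℂ)) * (V x : ℂ)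

/-- The fractional Laplacian `(-Δ)^{α/2} V(x) = (2π)^{-d} ∫ e^{i x·ξ} |ξ|^α V̂(ξ) dξ`
(real valued for real `V`). -/
def fracLap (d : ℕ) (α : ℝ) (V : Ed d → ℝ) (x : Ed d) : ℝ :=
  ((2 * Real.pi) ^ d)⁻¹ *
    (∫ ξ : Ed d, Complex.exp (Complex.I * ((inner ℝ x ξ : ℝ) : ℂ)) * ((‖ξ‖ ^ α : ℝ) : ℂ) *
      ftransform d V ξ).re

/-- The Dirichlet form `E_α(V) = (2π)^{-d} ∫ |V̂(ξ)|² |ξ|^α dξ`. -/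
def dirichletForm (d : ℕ) (α : ℝ) (V : Ed d → ℝ) : ℝ :=
  ((2 * Real.pi) ^ d)⁻¹ * ∫ ξ : Ed d, ‖ftransform d V ξ‖ ^ 2 * ‖ξ‖ ^ α

/-- `A(n, ℓ)` from the paper. -/
def Acoef (k n : ℕ) (l : Fin (k - 1) → ℕ) : ℝ :=
  ((n.factorial : ℝ) / ∏ i, ((l i).factorial : ℝ)) *
    ∫ lam in Ik k, ∏ i : Fin (k - 1),
      (lam ⟨i.1, by have := i.isLt; omega⟩ - lam ⟨i.1 + 1, by have := i.isLt; omega⟩) ^ (l i)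

/-- The coefficient `C_{n,k}(V)`. -/
def Cnk (d : ℕ) (α : ℝ) (V : Ed d → ℝ) (n k : ℕ) : ℝ :=
  ∑ l ∈ Finset.Nat.antidiagonalTuple (k - 1) n,
    Acoef k n l *
      (((2 * Real.pi) ^ (d * (k - 1)))⁻¹ *
        (∫ θ : (Fin (k - 1) → Ed d),
          ftransform d V (-(∑ i, θ i)) *
            ∏ i : Fin (k - 1),
              (ftransform d V (θ i) *
                ((‖∑ j ∈ Finset.Iic i, θ j‖ ^ (α * (l i : ℝ)) : ℝ) : ℂ))).re)

/-- The coefficient `C_ℓ(V) = Σ_{n+k=ℓ, k ≥ 2} C_{n,k}(V)/n!`. -/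
def Cl (d : ℕ) (α : ℝ) (V : Ed d → ℝ) (m : ℕ) : ℝ :=
  ∑ p ∈ (Finset.HasAntidiagonal.antidiagonal m).filter (fun p => 2 ≤ p.2),
    Cnk d α V p.1 p.2 / (p.1.factorial : ℝ)

/-- `T_k(t)` from the paper. -/
def Tk (d : ℕ) (α : ℝ) (V : Ed d → ℝ) (k : ℕ) (t : ℝ) : ℝ :=
  (∫ lam in Ik k,
    ((((2 * Real.pi) ^ (d * (k - 1)))⁻¹ : ℝ) : ℂ) *
      ∫ θ : (Fin (k - 1) → Ed d),
        ftransform d V (-(∑ i, θ i)) * (∏ i, ftransform d V (θ i)) *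
          ((Real.exp (-(t * ∑ r : Fin (k - 1),
            (lam ⟨r.1, by have := r.isLt; omega⟩ - lam ⟨r.1 + 1, by have := r.isLt; omega⟩) *
              ‖∑ m ∈ Finset.Iic r, θ m‖ ^ α)) : ℝ) : ℂ)).re

open FourierTransform ComplexConjugate
open scoped SchwartzMap

lemma Real.rpow_le_one_add_pow_ceil {x r : ℝ} (hx : 0 ≤ x) (hr : 0 ≤ r) :
    x ^ r ≤ 1 + x ^ ⌈r⌉₊ := by
  rcases le_total x 1 with h | h
  · linarith [Real.rpow_le_one hx h hr, pow_nonneg hx ⌈r⌉₊]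
  · have := Real.rpow_le_rpow_of_exponent_le h (Nat.le_ceil r)
    rw [Real.rpow_natCast] at this
    linarith

namespace SchwartzMap

variable {E F : Type*} [NormedAddCommGroup E] [NormedSpace ℝ E] [NormedAddCommGroup F]
  [NormedSpace ℝ F] [MeasurableSpace E] [BorelSpace E] [FiniteDimensional ℝ E]
  {μ : Measure E} [μ.HasTemperateGrowth]

lemma integrable_rpow_mul (f : 𝓢(E, F)) {r : ℝ} (hr : 0 ≤ r) :
    Integrable (fun x ↦ ‖x‖ ^ r * ‖f x‖) μ := by
  refine ((f.integrable (μ := μ)).norm.add (f.integrable_pow_mul μ ⌈r⌉₊)).mono'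
    (by fun_prop) (.of_forall fun x ↦ ?_)
  rw [norm_mul, Real.norm_of_nonneg (by positivity), norm_norm, Pi.add_apply, ← one_add_mul]
  gcongr
  exact Real.rpow_le_one_add_pow_ceil (norm_nonneg x) hr

lemma integrable_norm_sq_mul_rpow (f : 𝓢(E, F)) {r : ℝ} (hr : 0 ≤ r) :
    Integrable (fun x ↦ ‖f x‖ ^ 2 * ‖x‖ ^ r) μ := by
  refine ((f.integrable_rpow_mul (μ := μ) hr).bdd_mul (c := SchwartzMap.seminorm ℝ 0 0 f)
    f.continuous.norm.aestronglyMeasurable (.of_forall fun x ↦ ?_)).congr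
    (.of_forall fun x ↦ by ring)
  simpa using f.norm_le_seminorm ℝ x

end SchwartzMap

lemma eq_zero_of_integral_norm_sq_mul_rpow_eq_zero {E F : Type*} [NormedAddCommGroup E]
    [NormedSpace ℝ E] [Nontrivial E] [MeasurableSpace E] [OpensMeasurableSpace E]
    {μ : Measure E} [μ.IsOpenPosMeasure] [NormedAddCommGroup F] {g : E → F}
    (hg : Continuous g) {r : ℝ} (hr : 0 ≤ r)
    (hint : Integrable (fun x ↦ ‖g x‖ ^ 2 * ‖x‖ ^ r) μ)
    (hzero : ∫ x, ‖g x‖ ^ 2 * ‖x‖ ^ r ∂μ = 0) : g = 0 := by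
  have hoff : ∀ x, x ≠ 0 → g x = 0 := by
    intro x hx
    by_contra hgx
    refine (integral_pos_of_integrable_nonneg_nonzero (x := x) (by fun_prop) hint
      (fun y ↦ by positivity) ?_).ne' hzero
    positivity
  exact hg.ext_on (dense_compl_singleton 0) continuous_const hoff

section FourierTransform

variable {d : ℕ}

lemma ftransform_eq_fourier (V : Ed d → ℝ) (ξ : Ed d) :
    ftransform d V ξ = 𝓕 (fun x ↦ (V x : ℂ)) ((2 * π)⁻¹ • ξ) := by
  rw [ftransform, Real.fourier_eq']
  congr 1 with x
  rw [real_inner_smul_right, smul_eq_mul]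
  congr 1
  push_cast
  field_simp

lemma ftransform_neg (V : Ed d → ℝ) (ξ : Ed d) :
    ftransform d V (-ξ) = conj (ftransform d V ξ) := by
  rw [ftransform, ftransform, ← integral_conj]
  congr 1 with x
  simp only [map_mul, ← Complex.exp_conj, map_neg, Complex.conj_I, Complex.conj_ofReal,
    inner_neg_right]
  push_cast
  ring_nf

lemma exists_schwartzMap_eq_ftransform (V : 𝓢(Ed d, ℝ)) :
    ∃ Φ : 𝓢(Ed d, ℂ), ∀ ξ, Φ ξ = ftransform d V ξ := by
  let scale : Ed d ≃L[ℝ] Ed d :=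
    ContinuousLinearEquiv.smulLeft (Units.mk0 (2 * π)⁻¹ (by positivity))
  refine ⟨SchwartzMap.compCLMOfContinuousLinearEquiv ℝ scale
    (𝓕 (SchwartzMap.postcompCLM (𝕜 := ℝ) Complex.ofRealCLM V)), fun ξ ↦ ?_⟩
  rw [ftransform_eq_fourier]
  rfl

lemma eq_zero_of_ftransform_eq_zero (V : 𝓢(Ed d, ℝ)) (h : ∀ ξ, ftransform d V ξ = 0) :
    ∀ x, V x = 0 := by
  set Vc := SchwartzMap.postcompCLM (𝕜 := ℝ) Complex.ofRealCLM V
  have hfourier : 𝓕 Vc = 0 := by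
    ext y
    have := h ((2 * π) • y)
    rwa [ftransform_eq_fourier, smul_smul, inv_mul_cancel₀ (by positivity), one_smul] at this
  have hVc : Vc = 0 := (fourierEquiv ℂ 𝓢(Ed d, ℂ)).injective (by simpa using hfourier)
  intro x
  have : (V x : ℂ) = 0 := congrArg (· x) hVc
  exact_mod_cast this

end FourierTransform

lemma eq_zero_of_dirichletForm_eq_zero {d : ℕ} (hd : 1 ≤ d) (V : 𝓢(Ed d, ℝ)) {r : ℝ}
    (hr : 0 ≤ r) (h : dirichletForm d r V = 0) : ∀ x, V x = 0 := by
  have : Nonempty (Fin d) := ⟨⟨0, hd⟩⟩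
  obtain ⟨Φ, hΦ⟩ := exists_schwartzMap_eq_ftransform V
  have hint : ∫ ξ, ‖Φ ξ‖ ^ 2 * ‖ξ‖ ^ r = 0 := by
    simpa [dirichletForm, hΦ, Real.pi_ne_zero] using h
  have hΦ0 := eq_zero_of_integral_norm_sq_mul_rpow_eq_zero Φ.continuous hr
    (Φ.integrable_norm_sq_mul_rpow hr) hint
  exact eq_zero_of_ftransform_eq_zero V fun ξ ↦ by rw [← hΦ, hΦ0, Pi.zero_apply]

lemma isOpen_Ik (k : ℕ) : IsOpen (Ik k) := by
  simp only [Ik, Set.ofPred_and, Set.ofPred_forall, Set.mem_Ioo]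
  refine .inter (isOpen_iInter_of_finite fun i ↦ isOpen_iInter_of_finite fun j ↦
    isOpen_iInter_of_finite fun _ ↦ isOpen_lt (by fun_prop) (by fun_prop))
    (isOpen_iInter_of_finite fun i ↦ (isOpen_lt (by fun_prop) (by fun_prop)).inter
      (isOpen_lt (by fun_prop) (by fun_prop)))

lemma Acoef_nonneg (k n : ℕ) (l : Fin (k - 1) → ℕ) : 0 ≤ Acoef k n l := by
  refine mul_nonneg (by positivity) (setIntegral_nonneg (isOpen_Ik k).measurableSet
    fun lam hlam ↦ Finset.prod_nonneg fun i _ ↦ pow_nonneg (sub_nonneg.2 (hlam.1 _ _ ?_).le) _)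
  simp [Fin.lt_def]

lemma Acoef_two_pos (n : ℕ) : 0 < Acoef 2 n ![n] := by
  have hgap : ∀ lam ∈ Ik 2, 0 < lam 0 - lam 1 := fun lam hlam ↦
    sub_pos.2 (hlam.1 0 1 Fin.zero_lt_one)
  have hint : IntegrableOn (fun lam : Fin 2 → ℝ ↦ (lam 0 - lam 1) ^ n) (Ik 2) :=
    (ContinuousOn.integrableOn_compact (isCompact_Icc (a := 0) (b := 1))
      (by fun_prop)).mono_set fun lam hlam ↦
        ⟨fun i ↦ (hlam.2 i).1.le, fun i ↦ (hlam.2 i).2.le⟩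
  have hpos : 0 < ∫ lam in Ik 2, (lam 0 - lam 1) ^ n := by
    rw [setIntegral_pos_iff_support_of_nonneg_ae
      (ae_restrict_of_forall_mem (isOpen_Ik 2).measurableSet fun lam hlam ↦
        (pow_pos (hgap lam hlam) n).le) hint]
    refine (isOpen_Ik 2).measure_pos volume ⟨![2 / 3, 1 / 3], ?_⟩ |>.trans_le
      (measure_mono fun lam hlam ↦ ⟨(pow_pos (hgap lam hlam) n).ne', hlam⟩)
    refine ⟨fun i j hij ↦ ?_, fun i ↦ ?_⟩
    · revert hij; fin_cases i <;> fin_cases j <;> norm_num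
    · fin_cases i <;> norm_num
  simpa [Acoef, Nat.factorial_ne_zero] using hpos

lemma Cnk_two (d : ℕ) (α : ℝ) (V : Ed d → ℝ) (n : ℕ) :
    Cnk d α V n 2 = Acoef 2 n ![n] * dirichletForm d (α * n) V := by
  set F : Ed d → ℂ := fun θ ↦ ftransform d V (-θ) * (ftransform d V θ * ((‖θ‖ ^ (α * n) : ℝ) : ℂ))
  have hsq : ∀ θ, F θ = ((‖ftransform d V θ‖ ^ 2 * ‖θ‖ ^ (α * n) : ℝ) : ℂ) := fun θ ↦ by
    dsimp only [F]
    rw [ftransform_neg, ← mul_assoc, Complex.conj_mul']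
    push_cast
    ring
  have hIic : ∀ θ : Fin 1 → Ed d, ∑ j ∈ Finset.Iic 0, θ j = θ 0 := fun θ ↦ by
    rw [show Finset.Iic (0 : Fin 1) = {0} by decide, Finset.sum_singleton]
  have hunique : ∫ θ : Fin 1 → Ed d, F (θ 0) = ∫ θ, F θ :=
    (volume_preserving_funUnique (Fin 1) (Ed d)).integral_comp' F
  simp only [Cnk, dirichletForm, Nat.add_one_sub_one, Finset.Nat.antidiagonalTuple_one,
    Finset.sum_singleton, Fin.sum_univ_one, Fin.prod_univ_one, hIic, Matrix.cons_val_fin_one,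
    mul_one]
  rw [hunique, integral_congr_ae (.of_forall hsq), integral_complex_ofReal, Complex.ofReal_re]

section Nonneg

open scoped ComplexOrder

lemma Complex.re_integral_nonneg {X : Type*} [MeasurableSpace X] {μ : Measure X} {f : X → ℂ}
    (hf : ∀ x, 0 ≤ f x) : 0 ≤ (∫ x, f x ∂μ).re := by
  have hre : ∀ x, f x = ((f x).re : ℂ) := fun x ↦ Complex.eq_re_of_ofReal_le (hf x)
  rw [integral_congr_ae (.of_forall hre), integral_complex_ofReal, Complex.ofReal_re]
  exact integral_nonneg fun x ↦ Complex.nonneg_iff.1 (hf x) |>.1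

lemma Cnk_nonneg {d : ℕ} (α : ℝ) {V : Ed d → ℝ} (hV : ∀ ξ, 0 ≤ ftransform d V ξ) (n k : ℕ) :
    0 ≤ Cnk d α V n k :=
  Finset.sum_nonneg fun l _ ↦ mul_nonneg (Acoef_nonneg k n l) <| mul_nonneg (by positivity) <|
    Complex.re_integral_nonneg fun θ ↦ mul_nonneg (hV _) <| Finset.prod_nonneg fun i _ ↦
      mul_nonneg (hV _) (Complex.zero_le_real.2 (by positivity))

lemma Cnk_eq_zero_of_Cl_eq_zero {d : ℕ} {α : ℝ} {V : Ed d → ℝ}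
    (hV : ∀ ξ, 0 ≤ ftransform d V ξ) {m : ℕ} (hC : Cl d α V m = 0) {n k : ℕ}
    (hnk : n + k = m) (hk : 2 ≤ k) : Cnk d α V n k = 0 := by
  have hterm := (Finset.sum_eq_zero_iff_of_nonneg fun p _ ↦
    div_nonneg (Cnk_nonneg α hV p.1 p.2) (Nat.cast_nonneg _)).1 hC (n, k)
    (Finset.mem_filter.2 ⟨Finset.HasAntidiagonal.mem_antidiagonal.2 hnk, hk⟩)
  simpa [Nat.factorial_ne_zero] using hterm

end Nonneg

theorem vanishing_coefficient_implies_zero_general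
    (d : ℕ) (hd : 1 ≤ d) (α : ℝ) (hα0 : 0 < α)
    (V : SchwartzMap (Ed d) ℝ)
    (hft : ∀ ξ, (ftransform d (⇑V) ξ).im = 0 ∧ 0 ≤ (ftransform d (⇑V) ξ).re)
    (l : ℕ) (hl : 2 ≤ l) (hC : Cl d α (⇑V) l = 0) :
    ∀ x, V x = 0 := by
  have hCnk := Cnk_eq_zero_of_Cl_eq_zero (fun ξ ↦ Complex.nonneg_iff.2 ⟨(hft ξ).2, (hft ξ).1.symm⟩)
    hC (Nat.sub_add_cancel hl) le_rfl
  rw [Cnk_two, mul_eq_zero, or_iff_right (Acoef_two_pos _).ne'] at hCnk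
  exact eq_zero_of_dirichletForm_eq_zero hd V (by positivity) hCnk

/-- Corollary 3.4: if `V̂ ≥ 0` (real and nonnegative) and `C_ℓ(V) = 0` for some `ℓ ≥ 2`,
then `V ≡ 0`. -/
theorem vanishing_coefficient_implies_zero
    (d : ℕ) (hd : 1 ≤ d) (α : ℝ) (hα0 : 0 < α) (hα2 : α ≤ 2)
    (V : SchwartzMap (Ed d) ℝ)
    (hft : ∀ ξ, (ftransform d (⇑V) ξ).im = 0 ∧ 0 ≤ (ftransform d (⇑V) ξ).re)
    (l : ℕ) (hl : 2 ≤ l) (hC : Cl d α (⇑V) l = 0) :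
    ∀ x, V x = 0 :=
  vanishing_coefficient_implies_zero_general d hd α hα0 V hft l hl hC

end
end

section
/- Let k ≥ 3 be an integer and let ℓ_1, ..., ℓ_{k-1} be nonnegative real numbers with ℓ_1 + ... + ℓ_{k-1} = n. Then ∫_{I_k} ∏_{i=1}^{k-1} (λ_i - λ_{i+1})^{ℓ_i} dλ = (1 / ((k+n)(ℓ_{k-1}+1))) ∏_{i=1}^{k-2} ∫_0^1 (1-s)^{ℓ_i} s^{ k + n - (i + 1 + Σ_{j=1}^{i} ℓ_j) } ds. -/
open MeasureTheory Real Filter Topology Asymptotics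
open scoped RealInnerProductSpace

noncomputable section

/-!
Substituting `λ_i = x_0 x_1 ⋯ x_i` maps the open cube `(0,1)^k` bijectively onto `I_k`, with
lower-triangular Jacobian of determinant `λ_0 ⋯ λ_{k-2}`. Since `λ_i - λ_{i+1} = λ_i (1 - x_{i+1})`,
the transformed integrand is a product of functions of one variable each, so the integral splits
into one-dimensional Beta integrals; the first one and the last one are elementary and give the
factors `1/(k+n)` and `1/(ℓ_{k-1}+1)`.
-/

def cumProd {K : ℕ} (x : Fin K → ℝ) (i : Fin K) : ℝ := ∏ m ∈ Finset.Iic i, x m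

def openUnitCube (K : ℕ) : Set (Fin K → ℝ) := Set.univ.pi fun _ => Set.Ioo 0 1

lemma measurableSet_openUnitCube (K : ℕ) : MeasurableSet (openUnitCube K) :=
  .univ_pi fun _ => measurableSet_Ioo

section cumProd

variable {K : ℕ}

@[simp] lemma cumProd_zero (x : Fin (K + 1) → ℝ) : cumProd x 0 = x 0 := by
  simp [cumProd, ← bot_eq_zero]

lemma cumProd_succ (x : Fin (K + 1) → ℝ) (i : Fin K) :
    cumProd x i.succ = cumProd x i.castSucc * x i.succ := by
  rw [cumProd, ← Finset.prod_Iio_mul_eq_prod_Iic]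
  -- `Finset.Iio i.succ` and `Finset.Iic i.castSucc` are definitionally equal
  rfl

variable {x : Fin (K + 1) → ℝ}

lemma cumProd_pos (hx : x ∈ openUnitCube (K + 1)) (i : Fin (K + 1)) : 0 < cumProd x i :=
  Finset.prod_pos fun m _ => (hx m (Set.mem_univ _)).1

lemma strictAnti_cumProd (hx : x ∈ openUnitCube (K + 1)) : StrictAnti (cumProd x) :=
  Fin.strictAnti_iff_succ_lt.2 fun i => by
    rw [cumProd_succ]
    exact mul_lt_of_lt_one_right (cumProd_pos hx _) (hx _ (Set.mem_univ _)).2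

lemma cumProd_mem_Ik (hx : x ∈ openUnitCube (K + 1)) : cumProd x ∈ Ik (K + 1) :=
  ⟨fun _ _ hij => strictAnti_cumProd hx hij, fun i =>
    ⟨cumProd_pos hx i, ((strictAnti_cumProd hx).antitone (Fin.zero_le i)).trans_lt
      (by simpa using (hx 0 (Set.mem_univ _)).2)⟩⟩

end cumProd

def successiveRatios {K : ℕ} (lam : Fin (K + 1) → ℝ) : Fin (K + 1) → ℝ :=
  Fin.cons (lam 0) fun i => lam i.succ / lam i.castSucc

lemma bijOn_cumProd (K : ℕ) : Set.BijOn cumProd (openUnitCube (K + 1)) (Ik (K + 1)) := by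
  refine Set.InvOn.bijOn (f' := successiveRatios) ⟨fun x hx => ?_, fun lam hlam => ?_⟩
    (fun x hx => cumProd_mem_Ik hx) fun lam ⟨hanti, hmem⟩ => ?_
  · funext i
    induction i using Fin.cases with
    | zero => simp [successiveRatios]
    | succ i =>
      simp only [successiveRatios, Fin.cons_succ, cumProd_succ]
      exact mul_div_cancel_left₀ _ (cumProd_pos hx _).ne'
  · funext i
    induction i using Fin.induction with
    | zero => simp [successiveRatios]
    | succ i ih =>
      rw [cumProd_succ, ih]
      exact mul_div_cancel₀ _ (hlam.2 _).1.ne'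
  · intro i _
    induction i using Fin.cases with
    | zero => exact hmem 0
    | succ i =>
      exact ⟨div_pos (hmem _).1 (hmem _).1,
        (div_lt_one (hmem _).1).2 (hanti _ _ (Fin.castSucc_lt_succ))⟩

def cumProdJacobian {K : ℕ} (x : Fin K → ℝ) : Matrix (Fin K) (Fin K) ℝ :=
  fun i m => if m ≤ i then ∏ j ∈ (Finset.Iic i).erase m, x j else 0

lemma hasFDerivAt_cumProd {K : ℕ} (x : Fin K → ℝ) :
    HasFDerivAt cumProd (Matrix.toLin' (cumProdJacobian x)).toContinuousLinearMap x := by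
  refine hasFDerivAt_pi'' fun i => ?_
  refine (HasFDerivAt.finsetProd fun m _ => hasFDerivAt_apply m x).congr_fderiv ?_
  ext v
  simp only [ContinuousLinearMap.coe_comp, Function.comp_apply, ContinuousLinearMap.proj_apply,
    LinearMap.coe_toContinuousLinearMap', Matrix.toLin'_apply, Matrix.mulVec, dotProduct,
    cumProdJacobian, FunLike.coe_sum, Finset.sum_apply, FunLike.coe_smul,
    Pi.smul_apply, smul_eq_mul, ite_mul, zero_mul, ← Finset.mem_Iic]
  rw [Finset.sum_ite_mem, Finset.univ_inter]

lemma det_cumProdJacobian {K : ℕ} (x : Fin (K + 1) → ℝ) :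
    (cumProdJacobian x).det = ∏ i : Fin K, cumProd x i.castSucc := by
  rw [Matrix.det_of_isLowerTriangular (cumProdJacobian x) fun i m (hmi : i < m) =>
    if_neg hmi.not_ge, Fin.prod_univ_succ]
  simp only [cumProdJacobian, le_refl, if_true, Finset.Iic_erase, ← bot_eq_zero, Finset.Iio_bot,
    Finset.prod_empty, one_mul]
  rfl

theorem integral_Ik_eq_integral_openUnitCube {E : Type*} [NormedAddCommGroup E]
    [NormedSpace ℝ E] (K : ℕ) (f : (Fin (K + 1) → ℝ) → E) :
    ∫ lam in Ik (K + 1), f lam =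
      ∫ x in openUnitCube (K + 1), (∏ i : Fin K, cumProd x i.castSucc) • f (cumProd x) := by
  rw [← (bijOn_cumProd K).image_eq, integral_image_eq_integral_abs_det_fderiv_smul volume
    (measurableSet_openUnitCube _) (fun x _ => (hasFDerivAt_cumProd x).hasFDerivWithinAt)
    (bijOn_cumProd K).injOn]
  refine setIntegral_congr_fun (measurableSet_openUnitCube _) fun x hx => ?_
  rw [LinearMap.det_toContinuousLinearMap, LinearMap.det_toLin', det_cumProdJacobian,
    abs_of_pos (Finset.prod_pos fun i _ => cumProd_pos hx _)]

lemma prod_cumProd_castSucc_rpow {K : ℕ} {x : Fin (K + 1) → ℝ} (hx : ∀ m, 0 < x m)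
    (a : Fin K → ℝ) :
    ∏ i : Fin K, cumProd x i.castSucc ^ a i =
      x 0 ^ (∑ i, a i) * ∏ j : Fin K, x j.succ ^ (∑ i ∈ Finset.Ioi j, a i) := by
  have hswap : ∏ i : Fin K, ∏ m ∈ Finset.Iic i.castSucc, x m ^ a i =
      ∏ m : Fin (K + 1), ∏ i ∈ Finset.univ.filter (fun i : Fin K => m ≤ i.castSucc), x m ^ a i :=
    Finset.prod_comm' fun i m => by simp
  simp only [cumProd, ← Real.finsetProd_rpow _ _ fun m _ => (hx m).le, hswap,
    ← Real.rpow_sum_of_pos (hx _), Fin.prod_univ_succ, Fin.zero_le, Finset.filter_true]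
  congr 2 with j
  congr 2
  ext i
  simp [Fin.succ_le_castSucc_iff]

lemma cumProd_castSucc_sub_cumProd_succ {K : ℕ} (x : Fin (K + 1) → ℝ) (i : Fin K) :
    cumProd x i.castSucc - cumProd x i.succ = cumProd x i.castSucc * (1 - x i.succ) := by
  rw [cumProd_succ]; ring

lemma jacobian_mul_prod_cumProd_sub_rpow {K : ℕ} {x : Fin (K + 1) → ℝ}
    (hx : x ∈ openUnitCube (K + 1)) (l : Fin K → ℝ) :
    (∏ i : Fin K, cumProd x i.castSucc) *
        ∏ i : Fin K, (cumProd x i.castSucc - cumProd x i.succ) ^ l i =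
      x 0 ^ (∑ i, (l i + 1)) *
        ∏ j : Fin K, (1 - x j.succ) ^ l j * x j.succ ^ (∑ i ∈ Finset.Ioi j, (l i + 1)) := by
  have hpos : ∀ m, 0 < x m := fun m => (hx m (Set.mem_univ _)).1
  have hsub : ∀ m, 0 ≤ 1 - x m := fun m => sub_nonneg.2 (hx m (Set.mem_univ _)).2.le
  have hfactor : ∀ i : Fin K, cumProd x i.castSucc *
      (cumProd x i.castSucc - cumProd x i.succ) ^ l i =
        cumProd x i.castSucc ^ (l i + 1) * (1 - x i.succ) ^ l i := fun i => by
    have hc := cumProd_pos hx i.castSucc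
    rw [cumProd_castSucc_sub_cumProd_succ, Real.mul_rpow hc.le (hsub _), Real.rpow_add_one hc.ne']
    ring
  rw [← Finset.prod_mul_distrib, Finset.prod_congr rfl fun i _ => hfactor i,
    Finset.prod_mul_distrib, prod_cumProd_castSucc_rpow hpos, mul_assoc,
    ← Finset.prod_mul_distrib]
  exact congrArg _ (Finset.prod_congr rfl fun j _ => mul_comm _ _)

lemma setIntegral_univ_pi_prod {ι 𝕜 : Type*} [Fintype ι] [RCLike 𝕜] {E : ι → Type*}
    [∀ i, MeasureSpace (E i)] [∀ i, SigmaFinite (volume : Measure (E i))]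
    (s : (i : ι) → Set (E i)) (f : (i : ι) → E i → 𝕜) :
    ∫ x in Set.univ.pi s, ∏ i, f i (x i) = ∏ i, ∫ t in s i, f i t := by
  rw [volume_pi, Measure.restrict_pi_pi, integral_fintype_prod_eq_prod]

theorem integral_Ik_prod_sub_rpow_eq_prod (K : ℕ) (l : Fin K → ℝ) :
    ∫ lam in Ik (K + 1), ∏ i : Fin K, (lam i.castSucc - lam i.succ) ^ l i =
      (∫ s in Set.Ioo (0 : ℝ) 1, s ^ (∑ i, (l i + 1))) *
        ∏ j : Fin K, ∫ s in Set.Ioo (0 : ℝ) 1,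
          (1 - s) ^ l j * s ^ (∑ i ∈ Finset.Ioi j, (l i + 1)) := by
  rw [integral_Ik_eq_integral_openUnitCube]
  simp only [smul_eq_mul]
  rw [setIntegral_congr_fun (measurableSet_openUnitCube _)
    fun x hx => jacobian_mul_prod_cumProd_sub_rpow hx l]
  have := setIntegral_univ_pi_prod (fun _ : Fin (K + 1) => Set.Ioo (0 : ℝ) 1)
    (Fin.cons (fun s => s ^ (∑ i, (l i + 1)))
      fun j s => (1 - s) ^ l j * s ^ (∑ i ∈ Finset.Ioi j, (l i + 1)))
  simpa only [openUnitCube, Fin.prod_univ_succ, Fin.cons_zero, Fin.cons_succ] using this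

lemma integral_Ioo_rpow {a : ℝ} (ha : -1 < a) : ∫ s in Set.Ioo (0 : ℝ) 1, s ^ a = 1 / (a + 1) := by
  rw [← integral_Ioc_eq_integral_Ioo, ← intervalIntegral.integral_of_le zero_le_one,
    integral_rpow (.inl ha), one_rpow, zero_rpow (by linarith), sub_zero]

lemma integral_Ioo_one_sub_rpow {a : ℝ} (ha : -1 < a) :
    ∫ s in Set.Ioo (0 : ℝ) 1, (1 - s) ^ a = 1 / (a + 1) := by
  rw [← integral_Ioc_eq_integral_Ioo, ← intervalIntegral.integral_of_le zero_le_one,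
    intervalIntegral.integral_comp_sub_left (fun s => s ^ a), sub_self, sub_zero,
    integral_rpow (.inl ha), one_rpow, zero_rpow (by linarith), sub_zero]

lemma sum_Ioi_add_one_add_sum_Iic {K : ℕ} (l : Fin K → ℝ) (j : Fin K) :
    ∑ i ∈ Finset.Ioi j, (l i + 1) + (∑ i ∈ Finset.Iic j, l i + j + 1) = ∑ i, l i + K := by
  have hcard : ((Finset.Ioi j).card : ℝ) + j + 1 = K := by
    have := j.isLt
    rw [Fin.card_Ioi]
    push_cast [show 1 ≤ K by omega, show (j : ℕ) ≤ K - 1 by omega]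
    ring
  have hcompl : (Finset.Iic j)ᶜ = Finset.Ioi j := by ext; simp
  rw [← Finset.sum_compl_add_sum (Finset.Iic j), hcompl, Finset.sum_add_distrib,
    Finset.sum_const, nsmul_one, ← hcard]
  ring

theorem integral_Ik_prod_sub_rpow (K : ℕ) (l : Fin (K + 1) → ℝ) (hl : ∀ i, -1 < l i) :
    ∫ lam in Ik (K + 2), ∏ i : Fin (K + 1), (lam i.castSucc - lam i.succ) ^ l i =
      1 / ((((K + 2 : ℕ) : ℝ) + ∑ j, l j) * (l (Fin.last K) + 1)) *
        ∏ i : Fin K, ∫ s in (0 : ℝ)..1, (1 - s) ^ l i.castSucc *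
          s ^ (((K + 2 : ℕ) : ℝ) + ∑ j, l j -
            (((i : ℕ) : ℝ) + 2 + ∑ j ∈ Finset.Iic i.castSucc, l j)) := by
  have hfirst : ∫ s in Set.Ioo (0 : ℝ) 1, s ^ (∑ i, (l i + 1)) =
      1 / (((K + 2 : ℕ) : ℝ) + ∑ j, l j) := by
    have hnonneg : 0 ≤ ∑ i, (l i + 1) := Finset.sum_nonneg fun i _ => by linarith [hl i]
    rw [integral_Ioo_rpow (by linarith), Finset.sum_add_distrib]
    simp only [Finset.sum_const, Finset.card_univ, Fintype.card_fin, nsmul_eq_mul, mul_one]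
    push_cast
    ring_nf
  have hlast : ∫ s in Set.Ioo (0 : ℝ) 1, (1 - s) ^ l (Fin.last K) *
      s ^ (∑ i ∈ Finset.Ioi (Fin.last K), (l i + 1)) = 1 / (l (Fin.last K) + 1) := by
    rw [Finset.Ioi_eq_empty.2 (isMax_iff_eq_top.2 rfl : IsMax (Fin.last K)), Finset.sum_empty]
    simp only [rpow_zero, mul_one]
    exact integral_Ioo_one_sub_rpow (hl _)
  have hmiddle : ∀ i : Fin K, ∫ s in Set.Ioo (0 : ℝ) 1, (1 - s) ^ l i.castSucc *
      s ^ (∑ j ∈ Finset.Ioi i.castSucc, (l j + 1)) = ∫ s in (0 : ℝ)..1, (1 - s) ^ l i.castSucc *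
        s ^ (((K + 2 : ℕ) : ℝ) + ∑ j, l j -
            (((i : ℕ) : ℝ) + 2 + ∑ j ∈ Finset.Iic i.castSucc, l j)) := fun i => by
    have hexp : ∑ j ∈ Finset.Ioi i.castSucc, (l j + 1) = ((K + 2 : ℕ) : ℝ) + ∑ j, l j -
        (((i : ℕ) : ℝ) + 2 + ∑ j ∈ Finset.Iic i.castSucc, l j) := by
      have := sum_Ioi_add_one_add_sum_Iic l i.castSucc
      rw [Fin.val_castSucc] at this
      push_cast at this ⊢
      linarith
    rw [intervalIntegral.integral_of_le zero_le_one, integral_Ioc_eq_integral_Ioo, hexp]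
  rw [integral_Ik_prod_sub_rpow_eq_prod, Fin.prod_univ_castSucc, hfirst, hlast,
    Finset.prod_congr rfl fun i _ => hmiddle i, one_div, one_div, one_div, mul_inv]
  ring

/-- Lemma 4.1(b): for `k ≥ 3` and nonnegative reals `ℓ₁,...,ℓ_{k-1}` with `Σℓᵢ = n`,
`∫_{I_k} ∏ᵢ (λᵢ - λ_{i+1})^{ℓᵢ} dλ
  = (1/((k+n)(ℓ_{k-1}+1))) ∏_{i=1}^{k-2} ∫₀¹ (1-s)^{ℓᵢ} s^{k+n-(i+1+Σ_{j≤i}ℓⱼ)} ds`. -/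
theorem simplex_integral_general
    (k : ℕ) (hk : 3 ≤ k) (n : ℝ) (l : Fin (k - 1) → ℝ) (hl : ∀ i, 0 ≤ l i)
    (hsum : ∑ i, l i = n) :
    (∫ lam in Ik k, ∏ i : Fin (k - 1),
        (lam ⟨i.1, by have := i.isLt; omega⟩ -
          lam ⟨i.1 + 1, by have := i.isLt; omega⟩) ^ (l i)) =
      (1 / (((k : ℝ) + n) * (l ⟨k - 2, by omega⟩ + 1))) *
        ∏ i : Fin (k - 2),
          ∫ s in (0 : ℝ)..1,
            (1 - s) ^ (l ⟨i.1, by have := i.isLt; omega⟩) *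
              s ^ ((k : ℝ) + n -
                ((i.1 : ℝ) + 2 +
                  ∑ j ∈ Finset.Iic (⟨i.1, by have := i.isLt; omega⟩ : Fin (k - 1)), l j)) := by
  obtain ⟨N, rfl⟩ : ∃ N, k = N + 3 := ⟨k - 3, by omega⟩
  subst hsum
  -- the indices `⟨i.1, _⟩`, `⟨i.1 + 1, _⟩` and `⟨k - 2, _⟩` are definitionally
  -- `i.castSucc`, `i.succ` and `Fin.last`
  exact integral_Ik_prod_sub_rpow (N + 1) l fun i => neg_one_lt_zero.trans_le (hl i)

end
end
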